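/- Under the stationary continuous-time Markov chain setting, let (h_n) be a sequence of positive reals with h_n → 0 and n h_n → ∞, set t_j = j h_n, and define K_{ik}(n) = ∑_{j=1}^{n} 1_{{Z_{t_{j−1}} = i}} 1_{{Z_{t_j} = k}}. Then for every i ∈ S, (1/n) K_{ii}(n) converges to π_i in probability as n → ∞. -/

import Mathlib

/-!
The indicators `Y_j` of the events `{Z_{jh} = i, Z_{(j+1)h} = i}` have mean `π_i P_h(i,i) → π_i`,
and by the Markov property `Cov(Y_j, Y_k) = π_i P_h(i,i)² (P_{(k-j-1)h}(i,i) - π_i)` for `j < k`.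
Since the off-diagonal entries of `Q` are positive, `P_1 = exp Q` has positive entries, so Doeblin's
contraction gives `|P_t(i,k) - π_k| ≤ C e^{-λt}`. Summing the covariances as a geometric series,
`Var((1/n) K_ii(n)) ≤ (1 + 2C / (1 - e^{-λ h_n})) / n = O(1/n + 1/(n h_n)) → 0`,
and Chebyshev's inequality concludes.
-/

open MeasureTheory Finset Filter

/-- The σ-algebra generated by `(Z_u : 0 ≤ u ≤ s)`. -/
def filtZ {Ω : Type*} {N : ℕ} (Z : ℝ → Ω → Fin N) (s : ℝ) : MeasurableSpace Ω :=
  ⨆ u ∈ Set.Icc (0 : ℝ) s, MeasurableSpace.comap (Z u) ⊤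

open scoped Matrix Topology
open NormedSpace

namespace Matrix

variable {ι : Type*} [Fintype ι]

theorem exists_neg_le_diag (M : Matrix ι ι ℝ) : ∃ q, ∀ i, -q ≤ M i i := by
  obtain ⟨b, hb⟩ := (Set.finite_range fun i => M i i).bddBelow
  exact ⟨-b, fun i => by simpa using hb ⟨i, rfl⟩⟩

theorem sum_abs_vecMul_le {A : Matrix ι ι ℝ} (hA : ∀ i, ∑ j, A i j = 1) {δ : ℝ}
    (hδ : ∀ i j, δ ≤ A i j) {w : ι → ℝ} (hw : ∑ j, w j = 0) :
    ∑ k, |(w ᵥ* A) k| ≤ (1 - Fintype.card ι * δ) * ∑ j, |w j| := by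
  have hshift : ∀ k, (w ᵥ* A) k = ∑ j, w j * (A j k - δ) := fun k => by
    simp only [vecMul, dotProduct, mul_sub, sum_sub_distrib, ← sum_mul, hw, zero_mul, sub_zero]
  calc ∑ k, |(w ᵥ* A) k| ≤ ∑ k, ∑ j, |w j| * (A j k - δ) := by
        refine sum_le_sum fun k _ => (hshift k ▸ abs_sum_le_sum_abs _ _).trans_eq ?_
        simp only [abs_mul, abs_of_nonneg (sub_nonneg.2 (hδ _ k))]
    _ = (1 - Fintype.card ι * δ) * ∑ j, |w j| := by
        rw [sum_comm, mul_sum]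
        refine sum_congr rfl fun j _ => ?_
        rw [← mul_sum, sum_sub_distrib, hA, sum_const, card_univ, nsmul_eq_mul, mul_comm]

variable [DecidableEq ι]

theorem hasSum_exp_series (M : Matrix ι ι ℝ) :
    HasSum (fun k : ℕ => (k.factorial : ℝ)⁻¹ • M ^ k) (exp M) := by
  let : NormedRing (Matrix ι ι ℝ) := Matrix.linftyOpNormedRing
  let : NormedAlgebra ℝ (Matrix ι ι ℝ) := Matrix.linftyOpNormedAlgebra
  exact exp_series_hasSum_exp' M

theorem continuous_exp_smul (Q : Matrix ι ι ℝ) : Continuous fun t : ℝ => exp (t • Q) := by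
  let : NormedRing (Matrix ι ι ℝ) := Matrix.linftyOpNormedRing
  let : NormedAlgebra ℝ (Matrix ι ι ℝ) := Matrix.linftyOpNormedAlgebra
  let : NormedAlgebra ℚ (Matrix ι ι ℝ) := Matrix.linftyOpNormedAlgebra
  exact exp_continuous.comp (continuous_id.smul continuous_const)

theorem exp_mulVec_of_mulVec_eq_zero {M : Matrix ι ι ℝ} {v : ι → ℝ} (hM : M *ᵥ v = 0) :
    exp M *ᵥ v = v := by
  have h := (hasSum_exp_series M).map (mulVec.addMonoidHomLeft v)
    (continuous_id.matrix_mulVec continuous_const)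
  have h0 : ∀ k ≠ 0, ((k.factorial : ℝ)⁻¹ • M ^ k) *ᵥ v = 0 := by
    intro k hk
    obtain ⟨k, rfl⟩ := Nat.exists_eq_succ_of_ne_zero hk
    rw [smul_mulVec, pow_succ, ← mulVec_mulVec, hM, mulVec_zero, smul_zero]
  exact (h.unique (hasSum_single 0 h0)).trans (by simp)

theorem vecMul_exp_of_vecMul_eq_zero {M : Matrix ι ι ℝ} {v : ι → ℝ} (hM : v ᵥ* M = 0) :
    v ᵥ* exp M = v := by
  rw [← mulVec_transpose, ← exp_transpose]
  exact exp_mulVec_of_mulVec_eq_zero (by rwa [mulVec_transpose])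

theorem one_add_le_exp_apply {A : Matrix ι ι ℝ} (hA : ∀ i j, 0 ≤ A i j) (i j : ι) :
    (1 + A) i j ≤ exp A i j := by
  have h := sum_le_hasSum (range 2) (fun k _ => ?_)
    (Pi.hasSum.1 (Pi.hasSum.1 (hasSum_exp_series A) i) j)
  · simpa [sum_range_succ] using h
  · simpa using mul_nonneg (by positivity) (pow_apply_nonneg hA k i j)

theorem exp_smul_one (c : ℝ) : exp (c • (1 : Matrix ι ι ℝ)) = Real.exp c • 1 := by
  rw [smul_one_eq_diagonal, exp_diagonal, Pi.exp_def, ← Real.exp_eq_exp_ℝ, smul_one_eq_diagonal]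

theorem exp_eq_smul_exp_add (M : Matrix ι ι ℝ) (q : ℝ) :
    exp M = Real.exp (-q) • exp (M + q • 1) := by
  conv_lhs => rw [show M = (-q) • (1 : Matrix ι ι ℝ) + (M + q • 1) by module]
  rw [exp_add_of_commute _ _ ((Commute.one_left _).smul_left _), exp_smul_one, smul_one_mul]

theorem exp_neg_mul_le_exp_apply {M : Matrix ι ι ℝ} (hM : ∀ i j, i ≠ j → 0 ≤ M i j) {q : ℝ}
    (hq : ∀ i, -q ≤ M i i) (i j : ι) :
    Real.exp (-q) * (1 + (M + q • 1)) i j ≤ exp M i j := by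
  have hA : ∀ i j, 0 ≤ (M + q • 1) i j := by
    intro i j
    rcases eq_or_ne i j with rfl | hij
    · simpa using neg_le_iff_add_nonneg.1 (hq i)
    · simpa [one_apply_ne hij] using hM i j hij
  rw [exp_eq_smul_exp_add M q, smul_apply, smul_eq_mul]
  exact mul_le_mul_of_nonneg_left (one_add_le_exp_apply hA i j) (Real.exp_nonneg _)

theorem exp_apply_nonneg {M : Matrix ι ι ℝ} (hM : ∀ i j, i ≠ j → 0 ≤ M i j) (i j : ι) :
    0 ≤ exp M i j := by
  obtain ⟨q, hq⟩ := exists_neg_le_diag M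
  refine le_trans (mul_nonneg (Real.exp_nonneg _) ?_) (exp_neg_mul_le_exp_apply hM hq i j)
  rcases eq_or_ne i j with rfl | hij
  · simp only [add_apply, one_apply_eq, smul_apply, smul_eq_mul, mul_one]
    linarith [hq i]
  · simpa [one_apply_ne hij] using hM i j hij

theorem exp_apply_pos {M : Matrix ι ι ℝ} (hM : ∀ i j, i ≠ j → 0 < M i j) (i j : ι) :
    0 < exp M i j := by
  obtain ⟨q, hq⟩ := exists_neg_le_diag M
  refine lt_of_lt_of_le (mul_pos (Real.exp_pos _) ?_)
    (exp_neg_mul_le_exp_apply (fun i j h => (hM i j h).le) hq i j)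
  rcases eq_or_ne i j with rfl | hij
  · simp only [add_apply, one_apply_eq, smul_apply, smul_eq_mul, mul_one]
    linarith [hq i]
  · simpa [one_apply_ne hij] using hM i j hij

section Generator

variable {Q : Matrix ι ι ℝ} {π : ι → ℝ}

theorem exp_smul_mem_rowStochastic (hQ : ∀ i j, i ≠ j → 0 ≤ Q i j) (hQ1 : Q *ᵥ 1 = 0) {t : ℝ}
    (ht : 0 ≤ t) : exp (t • Q) ∈ rowStochastic ℝ ι :=
  ⟨exp_apply_nonneg fun i j h => smul_nonneg ht (hQ i j h),
    exp_mulVec_of_mulVec_eq_zero (by rw [smul_mulVec, hQ1, smul_zero])⟩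

theorem vecMul_exp_smul (hπQ : π ᵥ* Q = 0) (t : ℝ) : π ᵥ* exp (t • Q) = π :=
  vecMul_exp_of_vecMul_eq_zero (by rw [vecMul_smul, hπQ, smul_zero])

/-- Doeblin's argument: each unit of time contracts the `ℓ¹` distance to `π` by `1 - |ι| δ`. -/
theorem sum_abs_exp_smul_sub_le (hQ : ∀ i j, i ≠ j → 0 ≤ Q i j) (hQ1 : Q *ᵥ 1 = 0)
    (hπ : ∀ i, 0 ≤ π i) (hπ1 : ∑ i, π i = 1) (hπQ : π ᵥ* Q = 0) {δ : ℝ}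
    (hδ : ∀ i j, δ ≤ exp Q i j) (m : ℕ) {s : ℝ} (hs : 0 ≤ s) (i : ι) :
    ∑ k, |exp ((s + m) • Q) i k - π k| ≤ 2 * Real.exp (-(Fintype.card ι * δ * m)) := by
  have hP : ∀ t : ℝ, 0 ≤ t → exp (t • Q) ∈ rowStochastic ℝ ι :=
    fun t => exp_smul_mem_rowStochastic hQ hQ1
  induction m with
  | zero =>
    simp only [Nat.cast_zero, add_zero, mul_zero, neg_zero, Real.exp_zero, mul_one]
    calc ∑ k, |exp (s • Q) i k - π k| ≤ ∑ k, (exp (s • Q) i k + π k) := by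
          refine sum_le_sum fun k _ => (abs_sub _ _).trans_eq ?_
          rw [abs_of_nonneg (nonneg_of_mem_rowStochastic (hP s hs)), abs_of_nonneg (hπ k)]
      _ = 2 := by
          rw [sum_add_distrib, sum_row_of_mem_rowStochastic (hP s hs), hπ1]
          norm_num
  | succ m ih =>
    have hexp : exp ((s + (m + 1 : ℕ)) • Q) = exp ((s + m) • Q) * exp Q := by
      rw [← exp_add_of_commute _ _ ((Commute.refl Q).smul_left _)]
      congr 1
      push_cast
      module
    have hstep : ∀ k, exp ((s + (m + 1 : ℕ)) • Q) i k - π k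
        = ((exp ((s + m) • Q) i - π) ᵥ* exp Q) k := fun k => by
      rw [sub_vecMul, vecMul_exp_of_vecMul_eq_zero hπQ, hexp]
      rfl
    have hw : ∑ j, (exp ((s + m) • Q) i - π) j = 0 := by
      simp only [Pi.sub_apply]
      rw [sum_sub_distrib, sum_row_of_mem_rowStochastic (hP _ (by positivity)), hπ1, sub_self]
    have hA : ∀ j, ∑ k, exp Q j k = 1 := by
      simpa using sum_row_of_mem_rowStochastic (hP 1 zero_le_one)
    calc ∑ k, |exp ((s + (m + 1 : ℕ)) • Q) i k - π k|
        ≤ (1 - Fintype.card ι * δ) * ∑ j, |exp ((s + m) • Q) i j - π j| := by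
          simp only [hstep]
          exact sum_abs_vecMul_le hA hδ hw
      _ ≤ Real.exp (-(Fintype.card ι * δ)) * (2 * Real.exp (-(Fintype.card ι * δ * m))) :=
          mul_le_mul (Real.one_sub_le_exp_neg _) ih (sum_nonneg fun _ _ => abs_nonneg _)
            (Real.exp_nonneg _)
      _ = 2 * Real.exp (-(Fintype.card ι * δ * (m + 1 : ℕ))) := by
          rw [mul_left_comm, ← Real.exp_add]
          push_cast
          ring_nf

theorem exists_abs_exp_smul_sub_le (hQ : ∀ i j, i ≠ j → 0 < Q i j) (hQ1 : Q *ᵥ 1 = 0)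
    (hπ : ∀ i, 0 ≤ π i) (hπ1 : ∑ i, π i = 1) (hπQ : π ᵥ* Q = 0) :
    ∃ C r : ℝ, 0 < r ∧ ∀ t, 0 ≤ t → ∀ i k, |exp (t • Q) i k - π k| ≤ C * Real.exp (-(r * t)) := by
  rcases isEmpty_or_nonempty ι with hι | hι
  · exact ⟨0, 1, one_pos, fun _ _ i => isEmptyElim i⟩
  obtain ⟨p, hp⟩ := Finite.exists_min fun p : ι × ι => exp Q p.1 p.2
  set r := Fintype.card ι * exp Q p.1 p.2
  have hr : 0 < r := mul_pos (by exact_mod_cast Fintype.card_pos) (exp_apply_pos hQ p.1 p.2)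
  refine ⟨2 * Real.exp r, r, hr, fun t ht i k => ?_⟩
  set m := ⌊t⌋₊
  have hm : t - 1 ≤ m := by linarith [Nat.lt_floor_add_one t]
  calc |exp (t • Q) i k - π k| ≤ ∑ k, |exp ((t - m + m) • Q) i k - π k| := by
        rw [sub_add_cancel]
        exact single_le_sum (f := fun k => |exp (t • Q) i k - π k|)
          (fun _ _ => abs_nonneg _) (mem_univ k)
    _ ≤ 2 * Real.exp (-(r * m)) :=
        sum_abs_exp_smul_sub_le (fun i j h => (hQ i j h).le) hQ1 hπ hπ1 hπQ
          (fun i j => hp (i, j)) m (sub_nonneg.2 (Nat.floor_le ht)) i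
    _ ≤ 2 * Real.exp r * Real.exp (-(r * t)) := by
        rw [mul_assoc 2 (Real.exp r), ← Real.exp_add]
        gcongr
        nlinarith

end Generator

end Matrix

section Variance

open ProbabilityTheory

theorem sum_range_sum_range_le {c : ℕ → ℕ → ℝ} {a b r : ℝ} (hr0 : 0 ≤ r) (hr1 : r < 1)
    (hb : 0 ≤ b) (hdiag : ∀ j, c j j ≤ a)
    (hoff : ∀ j k, j < k → c j k ≤ b * r ^ (k - j - 1) ∧ c k j ≤ b * r ^ (k - j - 1))
    (n : ℕ) : ∑ j ∈ range n, ∑ k ∈ range n, c j k ≤ n * (a + 2 * b / (1 - r)) := by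
  have hgeom : ∀ n, ∑ j ∈ range n, b * r ^ (n - j - 1) ≤ b / (1 - r) := fun n => by
    have hg := geom_sum_Ico_le_of_lt_one (m := 0) (n := n) hr0 hr1
    rw [← range_eq_Ico, pow_zero, ← sum_range_reflect] at hg
    simp only [← mul_sum, Nat.sub_right_comm n _ 1, ← mul_one_div b]
    exact mul_le_mul_of_nonneg_left hg hb
  induction n with
  | zero => simp
  | succ n ih =>
    simp only [sum_range_succ, sum_add_distrib]
    have h1 : ∑ j ∈ range n, c j n ≤ b / (1 - r) :=
      (sum_le_sum fun j hj => (hoff j n (mem_range.1 hj)).1).trans (hgeom n)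
    have h2 : ∑ k ∈ range n, c n k ≤ b / (1 - r) :=
      (sum_le_sum fun k hk => (hoff k n (mem_range.1 hk)).2).trans (hgeom n)
    have hexpand : ((n + 1 : ℕ) : ℝ) * (a + 2 * b / (1 - r))
        = n * (a + 2 * b / (1 - r)) + b / (1 - r) + (b / (1 - r) + a) := by push_cast; ring
    linarith [hdiag n]

variable {Ω : Type*} [MeasurableSpace Ω] {μ : Measure Ω}

theorem variance_avg_le [IsFiniteMeasure μ] {X : ℕ → Ω → ℝ} (hX : ∀ j, MemLp (X j) 2 μ)
    {a b r : ℝ} (hr0 : 0 ≤ r) (hr1 : r < 1) (hb : 0 ≤ b) (hdiag : ∀ j, Var[X j; μ] ≤ a)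
    (hoff : ∀ j k, j < k → cov[X j, X k; μ] ≤ b * r ^ (k - j - 1)) (n : ℕ) :
    Var[fun ω => (1 / n : ℝ) * ∑ j ∈ range n, X j ω; μ] ≤ (a + 2 * b / (1 - r)) / n := by
  rw [variance_const_mul, variance_fun_sum' fun j _ => hX j]
  have h := sum_range_sum_range_le (c := fun j k => cov[X j, X k; μ]) hr0 hr1 hb
    (fun j => (covariance_self (hX j).aemeasurable).trans_le (hdiag j))
    (fun j k hjk => ⟨hoff j k hjk, covariance_comm (X j) (X k) ▸ hoff j k hjk⟩) n
  rcases Nat.eq_zero_or_pos n with rfl | hn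
  · simp
  calc (1 / n : ℝ) ^ 2 * ∑ j ∈ range n, ∑ k ∈ range n, cov[X j, X k; μ]
      ≤ (1 / n : ℝ) ^ 2 * (n * (a + 2 * b / (1 - r))) := by gcongr
    _ = (a + 2 * b / (1 - r)) / n := by field_simp

theorem tendstoInMeasure_of_tendsto_variance [IsFiniteMeasure μ] {X : ℕ → Ω → ℝ}
    (hX : ∀ n, MemLp (X n) 2 μ) {c : ℝ} (hvar : Tendsto (fun n => Var[X n; μ]) atTop (𝓝 0))
    (hmean : Tendsto (fun n => μ[X n]) atTop (𝓝 c)) :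
    TendstoInMeasure μ X atTop (fun _ => c) := by
  rw [tendstoInMeasure_iff_dist]
  intro ε hε
  have hcheb : Tendsto (fun n => ENNReal.ofReal (Var[X n; μ] / (ε / 2) ^ 2)) atTop (𝓝 0) := by
    simpa using ENNReal.tendsto_ofReal (hvar.div_const ((ε / 2) ^ 2))
  refine tendsto_of_tendsto_of_tendsto_of_le_of_le' tendsto_const_nhds hcheb
    (Eventually.of_forall fun n => zero_le) ?_
  filter_upwards [Metric.tendsto_nhds.1 hmean (ε / 2) (half_pos hε)] with n hn
  refine (measure_mono fun ω hω => ?_).trans (meas_ge_le_variance_div_sq (hX n) (half_pos hε))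
  change ε ≤ dist (X n ω) c at hω
  change ε / 2 ≤ |X n ω - μ[X n]|
  rw [Real.dist_eq] at hω hn
  linarith [abs_sub_le (X n ω) μ[X n] c]

variable [IsProbabilityMeasure μ]

theorem memLp_indicator_one {A : Set Ω} (hA : MeasurableSet A) :
    MemLp (A.indicator (1 : Ω → ℝ)) 2 μ :=
  memLp_indicator_const 2 hA 1 (Or.inr (measure_ne_top μ A))

theorem covariance_indicator_one {A B : Set Ω} (hA : MeasurableSet A) (hB : MeasurableSet B) :
    cov[A.indicator 1, B.indicator 1; μ] = μ.real (A ∩ B) - μ.real A * μ.real B := by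
  rw [covariance_eq_sub (memLp_indicator_one hA) (memLp_indicator_one hB),
    ← Set.inter_indicator_one, integral_indicator_one (hA.inter hB), integral_indicator_one hA,
    integral_indicator_one hB]

theorem variance_indicator_one_le_one {A : Set Ω} (hA : MeasurableSet A) :
    Var[A.indicator 1; μ] ≤ 1 := by
  rw [← covariance_self (memLp_indicator_one hA).aemeasurable, covariance_indicator_one hA hA,
    Set.inter_self]
  nlinarith [measureReal_le_one (μ := μ) (s := A), measureReal_nonneg (μ := μ) (s := A)]

end Variance

theorem tendsto_inv_mul_one_sub_exp_neg {r : ℝ} (hr : 0 < r) {h : ℕ → ℝ}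
    (hh0 : Tendsto h atTop (𝓝 0)) (hnh : Tendsto (fun n : ℕ => n * h n) atTop atTop) :
    Tendsto (fun n : ℕ => (n * (1 - Real.exp (-(r * h n))))⁻¹) atTop (𝓝 0) := by
  have hexp : Tendsto (fun n => Real.exp (-(r * h n))) atTop (𝓝 1) := by
    have h0 : Tendsto (fun n => -(r * h n)) atTop (𝓝 0) := by simpa using (hh0.const_mul r).neg
    exact (Real.continuous_exp.tendsto' 0 1 Real.exp_zero).comp h0
  refine Tendsto.inv_tendsto_atTop (tendsto_atTop_mono (fun n => ?_)
    ((hnh.const_mul_atTop hr).atTop_mul_pos one_pos hexp))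
  -- `x e^{-x} ≤ 1 - e^{-x}` is `1 + x ≤ e^x`
  have hx : (r * h n + 1) * Real.exp (-(r * h n)) ≤ 1 := by
    simpa [← Real.exp_add] using
      mul_le_mul_of_nonneg_right (Real.add_one_le_exp (r * h n)) (Real.exp_nonneg (-(r * h n)))
  nlinarith [(n.cast_nonneg : (0 : ℝ) ≤ n)]

section MarkovChain

open ProbabilityTheory

variable {Ω : Type*} {N : ℕ} {Z : ℝ → Ω → Fin N}

theorem measurableSet_filtZ {s u : ℝ} (hu : u ∈ Set.Icc 0 s) (x : Fin N) :
    MeasurableSet[filtZ Z s] {ω | Z u ω = x} :=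
  le_iSup₂ (f := fun u (_ : u ∈ Set.Icc (0 : ℝ) s) => MeasurableSpace.comap (Z u) ⊤) u hu _
    ⟨{x}, trivial, rfl⟩

/-- The paper's `K_{xy}(n)` is `∑ j ∈ range n` of the indicators of these events. -/
def transitionEvent (Z : ℝ → Ω → Fin N) (x y : Fin N) (h : ℝ) (j : ℕ) : Set Ω :=
  {ω | Z (j * h) ω = x} ∩ {ω | Z ((j + 1) * h) ω = y}

theorem sum_Icc_ite_mul_ite_eq_sum_indicator (x y : Fin N) (h : ℝ) (n : ℕ) (ω : Ω) :
    ∑ j ∈ Icc 1 n, (if Z ((j - 1 : ℝ) * h) ω = x then (1 : ℝ) else 0) *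
      (if Z ((j : ℝ) * h) ω = y then (1 : ℝ) else 0)
      = ∑ j ∈ range n, (transitionEvent Z x y h j).indicator 1 ω := by
  rw [← Ico_add_one_right_eq_Icc, sum_Ico_eq_sum_range, Nat.add_sub_cancel]
  refine sum_congr rfl fun j _ => ?_
  simp only [transitionEvent, Set.indicator_apply, Set.mem_inter_iff, Set.mem_ofPred_eq,
    Pi.one_apply, ite_and]
  push_cast
  split_ifs <;> simp_all [add_comm]

variable [MeasurableSpace Ω]

theorem measurableSet_setOf_eq (hZ : Measurable fun p : ℝ × Ω => Z p.1 p.2) (t : ℝ)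
    (x : Fin N) : MeasurableSet {ω | Z t ω = x} :=
  (hZ.comp measurable_prodMk_left) (MeasurableSet.singleton x)

theorem filtZ_le (hZ : Measurable fun p : ℝ × Ω => Z p.1 p.2) (s : ℝ) :
    filtZ Z s ≤ ‹MeasurableSpace Ω› :=
  iSup₂_le fun _ _ => (hZ.comp measurable_prodMk_left).comap_le

theorem measurableSet_transitionEvent (hZ : Measurable fun p : ℝ × Ω => Z p.1 p.2)
    (x y : Fin N) (h : ℝ) (j : ℕ) : MeasurableSet (transitionEvent Z x y h j) :=
  (measurableSet_setOf_eq hZ _ x).inter (measurableSet_setOf_eq hZ _ y)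

structure IsMarkovWith (μ : Measure Ω) (Z : ℝ → Ω → Fin N)
    (P : ℝ → Matrix (Fin N) (Fin N) ℝ) : Prop where
  measurable : Measurable fun p : ℝ × Ω => Z p.1 p.2
  condExp_eq : ∀ s t : ℝ, 0 ≤ s → s ≤ t → ∀ y : Fin N,
    μ[fun ω => if Z t ω = y then (1 : ℝ) else 0 | filtZ Z s] =ᵐ[μ] fun ω => P (t - s) (Z s ω) y

namespace IsMarkovWith

variable {μ : Measure Ω} [IsProbabilityMeasure μ] {P : ℝ → Matrix (Fin N) (Fin N) ℝ}
  {π : Fin N → ℝ}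

theorem measureReal_inter (hM : IsMarkovWith μ Z P) {s t : ℝ} (hs : 0 ≤ s) (hst : s ≤ t)
    {A : Set Ω} (hA : MeasurableSet[filtZ Z s] A) {x : Fin N} (hAx : A ⊆ {ω | Z s ω = x})
    (y : Fin N) : μ.real (A ∩ {ω | Z t ω = y}) = μ.real A * P (t - s) x y := by
  have hle := filtZ_le hM.measurable s
  have hy := measurableSet_setOf_eq hM.measurable t y
  have hind : (fun ω => if Z t ω = y then (1 : ℝ) else 0) = {ω | Z t ω = y}.indicator 1 := by
    ext ω; simp [Set.indicator_apply]
  have hint : Integrable (fun ω => if Z t ω = y then (1 : ℝ) else 0) μ := by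
    rw [hind]; exact (integrable_const 1).indicator hy
  calc μ.real (A ∩ {ω | Z t ω = y}) = ∫ ω in A, (if Z t ω = y then (1 : ℝ) else 0) ∂μ := by
        rw [hind, integral_indicator_one hy, measureReal_restrict_apply hy, Set.inter_comm]
    _ = ∫ ω in A, P (t - s) (Z s ω) y ∂μ := by
        rw [← setIntegral_condExp hle hint hA]
        exact setIntegral_congr_ae (hle _ hA) ((hM.condExp_eq s t hs hst y).mono fun ω h _ => h)
    _ = μ.real A * P (t - s) x y := by
        rw [setIntegral_congr_fun (hle _ hA) fun ω hω => by rw [hAx hω], setIntegral_const,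
          smul_eq_mul]

theorem measureReal_setOf_eq (hM : IsMarkovWith μ Z P) (hπ : ∀ x, 0 ≤ π x)
    (hZ0 : ∀ x, μ {ω | Z 0 ω = x} = ENNReal.ofReal (π x)) (hπP : ∀ t, 0 ≤ t → π ᵥ* P t = π)
    {s : ℝ} (hs : 0 ≤ s) (y : Fin N) : μ.real {ω | Z s ω = y} = π y := by
  have hsplit : {ω | Z s ω = y} = ⋃ x, {ω | Z 0 ω = x} ∩ {ω | Z s ω = y} := by ext; simp
  rw [hsplit, measureReal_iUnion_fintype
    (fun x x' hxx' => Set.disjoint_left.2 fun ω hx hx' => hxx' (hx.1.symm.trans hx'.1))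
    (fun x => (measurableSet_setOf_eq hM.measurable 0 x).inter
      (measurableSet_setOf_eq hM.measurable s y))]
  calc ∑ x, μ.real ({ω | Z 0 ω = x} ∩ {ω | Z s ω = y}) = ∑ x, π x * P s x y := by
        refine sum_congr rfl fun x _ => ?_
        rw [hM.measureReal_inter le_rfl hs (measurableSet_filtZ ⟨le_rfl, le_rfl⟩ x) subset_rfl,
          measureReal_def, hZ0, ENNReal.toReal_ofReal (hπ x), sub_zero]
    _ = π y := congrFun (hπP s hs) y

theorem measureReal_transitionEvent (hM : IsMarkovWith μ Z P)
    (hlaw : ∀ s, 0 ≤ s → ∀ x, μ.real {ω | Z s ω = x} = π x) (x y : Fin N) {h : ℝ} (hh : 0 ≤ h)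
    (j : ℕ) : μ.real (transitionEvent Z x y h j) = π x * P h x y := by
  have ha : 0 ≤ j * h := by positivity
  rw [transitionEvent, hM.measureReal_inter ha (by nlinarith) (measurableSet_filtZ ⟨ha, le_rfl⟩ x)
    subset_rfl, hlaw _ ha, add_mul, one_mul, add_sub_cancel_left]

theorem measureReal_transitionEvent_inter (hM : IsMarkovWith μ Z P)
    (hlaw : ∀ s, 0 ≤ s → ∀ x, μ.real {ω | Z s ω = x} = π x) (x y : Fin N) {h : ℝ} (hh : 0 ≤ h)
    {j k : ℕ} (hjk : j < k) :
    μ.real (transitionEvent Z x y h j ∩ transitionEvent Z x y h k)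
      = π x * P h x y * P ((k - j - 1 : ℕ) * h) y x * P h x y := by
  have hjk' : (j : ℝ) + 1 ≤ k := by exact_mod_cast hjk
  have ha : 0 ≤ j * h := by positivity
  have hb : 0 ≤ (j + 1) * h := by positivity
  have hc : 0 ≤ k * h := by positivity
  have hbc : (j + 1) * h ≤ k * h := by nlinarith
  have hgap : (k : ℝ) * h - (j + 1) * h = (k - j - 1 : ℕ) * h := by
    push_cast [Nat.sub_sub, Nat.cast_sub (show j + 1 ≤ k from hjk)]
    ring
  have hE : MeasurableSet[filtZ Z ((j + 1) * h)] (transitionEvent Z x y h j) :=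
    (measurableSet_filtZ ⟨ha, by nlinarith⟩ x).inter (measurableSet_filtZ ⟨hb, le_rfl⟩ y)
  have hEk : MeasurableSet[filtZ Z (k * h)] (transitionEvent Z x y h j ∩ {ω | Z (k * h) ω = x}) :=
    ((measurableSet_filtZ ⟨ha, by nlinarith⟩ x).inter (measurableSet_filtZ ⟨hb, hbc⟩ y)).inter
      (measurableSet_filtZ ⟨hc, le_rfl⟩ x)
  have hk : transitionEvent Z x y h k = {ω | Z (k * h) ω = x} ∩ {ω | Z ((k + 1) * h) ω = y} :=
    rfl
  rw [hk, ← Set.inter_assoc,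
    hM.measureReal_inter hc (by nlinarith) hEk Set.inter_subset_right,
    hM.measureReal_inter hb hbc hE Set.inter_subset_right,
    hM.measureReal_transitionEvent hlaw x y hh, hgap, add_mul, one_mul, add_sub_cancel_left]

theorem covariance_transitionEvent_le (hM : IsMarkovWith μ Z P)
    (hlaw : ∀ s, 0 ≤ s → ∀ x, μ.real {ω | Z s ω = x} = π x) {x y : Fin N} {C r : ℝ}
    (hmix : ∀ t, 0 ≤ t → |P t y x - π x| ≤ C * Real.exp (-(r * t))) {h : ℝ} (hh : 0 ≤ h)
    (hp0 : 0 ≤ P h x y) (hp1 : P h x y ≤ 1) {j k : ℕ} (hjk : j < k) :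
    cov[(transitionEvent Z x y h j).indicator 1, (transitionEvent Z x y h k).indicator 1; μ]
      ≤ C * Real.exp (-(r * h)) ^ (k - j - 1) := by
  set t : ℝ := (k - j - 1 : ℕ) * h
  have hπx := hlaw 0 le_rfl x
  have hw : 0 ≤ π x * P h x y ^ 2 := by rw [← hπx]; positivity
  have hw1 : π x * P h x y ^ 2 ≤ 1 := by
    rw [← hπx]
    exact mul_le_one₀ measureReal_le_one (sq_nonneg _) (pow_le_one₀ hp0 hp1)
  have hC : 0 ≤ C * Real.exp (-(r * t)) := (abs_nonneg _).trans (hmix t (by positivity))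
  rw [covariance_indicator_one (measurableSet_transitionEvent hM.measurable x y h j)
      (measurableSet_transitionEvent hM.measurable x y h k),
    hM.measureReal_transitionEvent_inter hlaw x y hh hjk,
    hM.measureReal_transitionEvent hlaw x y hh, hM.measureReal_transitionEvent hlaw x y hh,
    ← Real.exp_nat_mul, show (k - j - 1 : ℕ) * -(r * h) = -(r * t) by ring]
  calc π x * P h x y * P t y x * P h x y - π x * P h x y * (π x * P h x y)
      = π x * P h x y ^ 2 * (P t y x - π x) := by ring
    _ ≤ π x * P h x y ^ 2 * (C * Real.exp (-(r * t))) :=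
        mul_le_mul_of_nonneg_left (abs_le.1 (hmix t (by positivity))).2 hw
    _ ≤ C * Real.exp (-(r * t)) := mul_le_of_le_one_left hC hw1

theorem variance_avg_indicator_transitionEvent_le (hM : IsMarkovWith μ Z P)
    (hlaw : ∀ s, 0 ≤ s → ∀ x, μ.real {ω | Z s ω = x} = π x) {x y : Fin N} {C r : ℝ} (hr : 0 < r)
    (hmix : ∀ t, 0 ≤ t → |P t y x - π x| ≤ C * Real.exp (-(r * t))) {h : ℝ} (hh : 0 < h)
    (hp0 : 0 ≤ P h x y) (hp1 : P h x y ≤ 1) (n : ℕ) :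
    Var[fun ω => (1 / n : ℝ) * ∑ j ∈ range n, (transitionEvent Z x y h j).indicator 1 ω; μ]
      ≤ (1 + 2 * C / (1 - Real.exp (-(r * h)))) / n := by
  have hE := measurableSet_transitionEvent hM.measurable x y h
  exact variance_avg_le (fun j => memLp_indicator_one (hE j)) (Real.exp_nonneg _)
    (Real.exp_lt_one_iff.2 (by nlinarith))
    (nonneg_of_mul_nonneg_left ((abs_nonneg _).trans (hmix 0 le_rfl)) (Real.exp_pos _))
    (fun j => variance_indicator_one_le_one (hE j))
    (fun j k hjk => hM.covariance_transitionEvent_le hlaw hmix hh.le hp0 hp1 hjk) n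

theorem integral_avg_indicator_transitionEvent (hM : IsMarkovWith μ Z P)
    (hlaw : ∀ s, 0 ≤ s → ∀ x, μ.real {ω | Z s ω = x} = π x) (x y : Fin N) {h : ℝ} (hh : 0 ≤ h)
    {n : ℕ} (hn : n ≠ 0) :
    μ[fun ω => (1 / n : ℝ) * ∑ j ∈ range n, (transitionEvent Z x y h j).indicator 1 ω]
      = π x * P h x y := by
  have hE := measurableSet_transitionEvent hM.measurable x y h
  rw [integral_const_mul,
    integral_finsetSum _ fun j _ => (memLp_indicator_one (hE j)).integrable one_le_two]
  simp_rw [integral_indicator_one (hE _), hM.measureReal_transitionEvent hlaw x y hh]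
  rw [sum_const, card_range, nsmul_eq_mul]
  field_simp

theorem tendstoInMeasure_avg_indicator_transitionEvent (hM : IsMarkovWith μ Z P)
    (hlaw : ∀ s, 0 ≤ s → ∀ x, μ.real {ω | Z s ω = x} = π x) {x y : Fin N} {C r : ℝ} (hr : 0 < r)
    (hmix : ∀ t, 0 ≤ t → |P t y x - π x| ≤ C * Real.exp (-(r * t)))
    (hP : ∀ t, 0 ≤ t → 0 ≤ P t x y ∧ P t x y ≤ 1) {h : ℕ → ℝ} (hh : ∀ n, 0 < h n)
    (hh0 : Tendsto h atTop (𝓝 0)) (hnh : Tendsto (fun n : ℕ => n * h n) atTop atTop) {c : ℝ}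
    (hc : Tendsto (fun n => P (h n) x y) atTop (𝓝 c)) :
    TendstoInMeasure μ (fun (n : ℕ) ω =>
        (1 / n : ℝ) * ∑ j ∈ range n, (transitionEvent Z x y (h n) j).indicator 1 ω)
      atTop (fun _ => π x * c) := by
  refine tendstoInMeasure_of_tendsto_variance (fun n => ?_) ?_ ?_
  · exact (memLp_finsetSum _ fun j _ => memLp_indicator_one
      (measurableSet_transitionEvent hM.measurable x y _ j)).const_mul _
  · refine squeeze_zero (fun n => variance_nonneg _ _) (fun n =>
      hM.variance_avg_indicator_transitionEvent_le hlaw hr hmix (hh n) (hP _ (hh n).le).1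
        (hP _ (hh n).le).2 n) ?_
    have hlim := tendsto_one_div_atTop_nhds_zero_nat.add
      ((tendsto_inv_mul_one_sub_exp_neg hr hh0 hnh).const_mul (2 * C))
    rw [mul_zero, add_zero] at hlim
    exact hlim.congr fun n => by rw [mul_inv]; ring
  · exact (hc.const_mul (π x)).congr' (eventually_atTop.2 ⟨1, fun n hn =>
      (hM.integral_avg_indicator_transitionEvent hlaw x y (hh n).le (by omega)).symm⟩)

end IsMarkovWith

end MarkovChain

theorem stmt9_general {Ω : Type*} [MeasurableSpace Ω] (ℙ : Measure Ω) [IsProbabilityMeasure ℙ]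
    (N : ℕ)
    (Q : Matrix (Fin N) (Fin N) ℝ)
    (hQoff : ∀ i j : Fin N, i ≠ j → 0 < Q i j)
    (hQdiag : ∀ i : Fin N, Q i i = -∑ j ∈ Finset.univ.erase i, Q i j)
    (π : Fin N → ℝ)
    (hπnn : ∀ i, 0 ≤ π i) (hπsum : ∑ i, π i = 1)
    (hπQ : ∀ j, ∑ i, π i * Q i j = 0)
    (Z : ℝ → Ω → Fin N)
    (hZmeas : Measurable fun p : ℝ × Ω => Z p.1 p.2)
    (hZ0 : ∀ i, ℙ {ω | Z 0 ω = i} = ENNReal.ofReal (π i))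
    (hMarkov : ∀ s t : ℝ, 0 ≤ s → s ≤ t → ∀ k : Fin N,
      MeasureTheory.condExp (filtZ Z s) ℙ (fun ω => if Z t ω = k then (1 : ℝ) else 0)
        =ᵐ[ℙ] fun ω => NormedSpace.exp ((t - s) • Q) (Z s ω) k)
    (h : ℕ → ℝ) (hhpos : ∀ n, 0 < h n)
    (hh0 : Tendsto h atTop (nhds 0))
    (hnh : Tendsto (fun n : ℕ => (n : ℝ) * h n) atTop atTop) :
    -- `(1/n) K_{ii}(n)` converges to `π_i` in probability.
    ∀ i : Fin N,
      TendstoInMeasure ℙ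
        (fun (n : ℕ) (ω : Ω) =>
          (1 / (n : ℝ)) *
            ∑ j ∈ Finset.Icc 1 n,
              (if Z (((j : ℝ) - 1) * h n) ω = i then (1 : ℝ) else 0) *
                (if Z ((j : ℝ) * h n) ω = i then (1 : ℝ) else 0))
        atTop (fun _ => π i) := by
  intro i
  have hQ1 : Q *ᵥ 1 = 0 := funext fun k => by
    simp only [Matrix.mulVec, dotProduct, Pi.one_apply, mul_one, Pi.zero_apply]
    rw [← add_sum_erase _ _ (mem_univ k), hQdiag k, neg_add_cancel]
  have hπQ' : π ᵥ* Q = 0 := funext hπQ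
  have hP : ∀ t : ℝ, 0 ≤ t → exp (t • Q) ∈ Matrix.rowStochastic ℝ (Fin N) :=
    fun t => Matrix.exp_smul_mem_rowStochastic (fun i j h => (hQoff i j h).le) hQ1
  have hM : IsMarkovWith ℙ Z fun t => exp (t • Q) := ⟨hZmeas, hMarkov⟩
  have hlaw : ∀ s, 0 ≤ s → ∀ x, ℙ.real {ω | Z s ω = x} = π x := fun s hs =>
    hM.measureReal_setOf_eq hπnn hZ0 (fun t _ => Matrix.vecMul_exp_smul hπQ' t) hs
  obtain ⟨C, r, hr, hmix⟩ := Matrix.exists_abs_exp_smul_sub_le hQoff hQ1 hπnn hπsum hπQ'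
  have hdiag : Tendsto (fun n => exp (h n • Q) i i) atTop (𝓝 1) :=
    (((Matrix.continuous_exp_smul Q).matrix_elem i i).tendsto' 0 1 (by simp)).comp hh0
  simp only [sum_Icc_ite_mul_ite_eq_sum_indicator]
  simpa using hM.tendstoInMeasure_avg_indicator_transitionEvent hlaw hr
    (fun t ht => hmix t ht i i) (fun t ht => ⟨Matrix.nonneg_of_mem_rowStochastic (hP t ht),
      Matrix.le_one_of_mem_rowStochastic (hP t ht)⟩) hhpos hh0 hnh hdiag

theorem stmt9 {Ω : Type*} [MeasurableSpace Ω] (ℙ : Measure Ω) [IsProbabilityMeasure ℙ]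
    (N : ℕ) (hN : 2 ≤ N)
    (Q : Matrix (Fin N) (Fin N) ℝ)
    (hQoff : ∀ i j : Fin N, i ≠ j → 0 < Q i j)
    (hQdiag : ∀ i : Fin N, Q i i = -∑ j ∈ Finset.univ.erase i, Q i j)
    (π : Fin N → ℝ)
    (hπnn : ∀ i, 0 ≤ π i) (hπsum : ∑ i, π i = 1)
    (hπQ : ∀ j, ∑ i, π i * Q i j = 0)
    (hπuniq : ∀ π' : Fin N → ℝ, (∀ i, 0 ≤ π' i) → (∑ i, π' i = 1) →
      (∀ j, ∑ i, π' i * Q i j = 0) → π' = π)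
    (Z : ℝ → Ω → Fin N)
    (hZmeas : Measurable fun p : ℝ × Ω => Z p.1 p.2)
    (hZ0 : ∀ i, ℙ {ω | Z 0 ω = i} = ENNReal.ofReal (π i))
    (hMarkov : ∀ s t : ℝ, 0 ≤ s → s ≤ t → ∀ k : Fin N,
      MeasureTheory.condExp (filtZ Z s) ℙ (fun ω => if Z t ω = k then (1 : ℝ) else 0)
        =ᵐ[ℙ] fun ω => NormedSpace.exp ((t - s) • Q) (Z s ω) k)
    (h : ℕ → ℝ) (hhpos : ∀ n, 0 < h n)
    (hh0 : Tendsto h atTop (nhds 0))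
    (hnh : Tendsto (fun n : ℕ => (n : ℝ) * h n) atTop atTop) :
    -- `(1/n) K_{ii}(n)` converges to `π_i` in probability.
    ∀ i : Fin N,
      TendstoInMeasure ℙ
        (fun (n : ℕ) (ω : Ω) =>
          (1 / (n : ℝ)) *
            ∑ j ∈ Finset.Icc 1 n,
              (if Z (((j : ℝ) - 1) * h n) ω = i then (1 : ℝ) else 0) *
                (if Z ((j : ℝ) * h n) ω = i then (1 : ℝ) else 0))
        atTop (fun _ => π i) :=
  stmt9_general ℙ N Q hQoff hQdiag π hπnn hπsum hπQ Z hZmeas hZ0 hMarkov h hhpos hh0 hnh
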